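/- Suppose f : ℝ^d → ℝ is twice continuously differentiable and L-smooth. Fix μ ∈ ℝ^d, α > 0, and a symmetric positive definite d×d matrix Σ with τ·I ⪯ Σ^{-1} ⪯ ζ·I where 0 < τ ≤ ζ. If u ∈ ℝ^d satisfies ‖u‖² ≤ c for some c > 0, then ‖(f(μ − αΣ^{1/2}u) + f(μ + αΣ^{1/2}u) − 2f(μ))·(Σ^{-1/2}uuᵀΣ^{-1/2} − Σ^{-1})‖_F ≤ 2Lτ^{-1}α²·c·(ζc + √d·ζ). -/

import Mathlib

open MeasureTheory ProbabilityTheory Matrix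
open scoped BigOperators RealInnerProductSpace

noncomputable section

abbrev Vec (d : ℕ) := EuclideanSpace ℝ (Fin d)
abbrev Mat (d : ℕ) := Matrix (Fin d) (Fin d) ℝ

/-- View a Euclidean vector as a plain function. -/
def toPi {d : ℕ} (u : Vec d) : Fin d → ℝ := WithLp.ofLp u
/-- View a plain function as a Euclidean vector. -/
def ofPi {d : ℕ} (u : Fin d → ℝ) : Vec d := WithLp.toLp 2 u

open scoped ComplexOrder in
/-- The positive semidefinite square root of a positive semidefinite matrix
(the definition `Matrix.PosSemidef.sqrt` of the older Mathlib, removed since). -/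
noncomputable def Matrix.PosSemidef.sqrt {n 𝕜 : Type*} [Fintype n] [DecidableEq n] [RCLike 𝕜]
    {A : Matrix n n 𝕜} (hA : A.PosSemidef) : Matrix n n 𝕜 :=
  hA.1.eigenvectorUnitary.1 * Matrix.diagonal ((↑) ∘ (Real.sqrt ∘ hA.1.eigenvalues)) *
    (star hA.1.eigenvectorUnitary : Matrix n n 𝕜)

/-- Matrix-vector multiplication on Euclidean space. -/
def mvec {d : ℕ} (A : Mat d) (u : Vec d) : Vec d := ofPi (A.mulVec (toPi u))

/-- The standard Gaussian measure N(0, I_d) on ℝ^d. -/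
def gaussD (d : ℕ) : Measure (Vec d) :=
  (Measure.pi fun _ : Fin d => gaussianReal 0 1).map (MeasurableEquiv.toLp 2 (Fin d → ℝ))

/-- Frobenius norm of a matrix. -/
def matFrobNorm {m n : ℕ} (A : Matrix (Fin m) (Fin n) ℝ) : ℝ :=
  Real.sqrt (∑ i, ∑ j, (A i j) ^ 2)

/-- Operator (spectral) norm of a matrix. -/
def matOpNorm {m n : ℕ} (A : Matrix (Fin m) (Fin n) ℝ) : ℝ :=
  ‖LinearMap.toContinuousLinearMap (Matrix.toEuclideanLin A)‖

/-- Loewner order `A ⪯ B`. -/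
def loeLE {d : ℕ} (A B : Mat d) : Prop := (B - A).PosSemidef

/-- Hessian matrix of `f` at `x`. -/
def hess {d : ℕ} (f : Vec d → ℝ) (x : Vec d) : Mat d :=
  Matrix.of fun i j =>
    iteratedFDeriv ℝ 2 f x ![EuclideanSpace.single i 1, EuclideanSpace.single j 1]

/-- Membership in `S = {Σ symmetric : ζ⁻¹ I ⪯ Σ ⪯ τ⁻¹ I}`. -/
def Smem {d : ℕ} (τ ζ : ℝ) (A : Mat d) : Prop :=
  A.IsSymm ∧ loeLE (ζ⁻¹ • 1) A ∧ loeLE A (τ⁻¹ • 1)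

/-- Membership in `S' = {A symmetric : τ I ⪯ A ⪯ ζ I}`. -/
def S'mem {d : ℕ} (τ ζ : ℝ) (A : Mat d) : Prop :=
  A.IsSymm ∧ loeLE (τ • 1) A ∧ loeLE A (ζ • 1)

/-- The regularized reparameterized objective `Q_α(μ, Σ)`. -/
def Qa {d : ℕ} (f : Vec d → ℝ) (α : ℝ) (μ : Vec d) (S : Mat d) (hS : S.PosSemidef) : ℝ :=
  (∫ u, f (μ + α • mvec hS.sqrt u) ∂ gaussD d) - α ^ 2 / 2 * Real.log S.det

/-
The scalar factor is a second difference of `f` along `h = α Σ^{1/2} u`. Subtracting the tangent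
map at `μ` and applying the mean value inequality on the ball of radius `‖h‖`, Lipschitz
continuity of `Df` bounds it by `2L‖h‖²`, and `‖Σ^{1/2} u‖² ≤ τ⁻¹ ‖u‖²` because
`(Σ^{1/2} u)ᵀ Σ⁻¹ (Σ^{1/2} u) = ‖u‖²`. The matrix factor is split by the triangle inequality: the
rank-one part has Frobenius norm `‖Σ^{-1/2} u‖² = uᵀ Σ⁻¹ u ≤ ζ c`, and a positive semidefinite
`A ⪯ ζ I` satisfies `‖A x‖² = (A^{1/2} x)ᵀ A (A^{1/2} x) ≤ ζ xᵀ A x ≤ ζ² ‖x‖²`, so each column of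
`A` has norm at most `ζ` and `‖A‖_F ≤ √d ζ`.
-/

open scoped NNReal

section SecondDifference

variable {E F : Type*} [NormedAddCommGroup E] [NormedSpace ℝ E]
  [NormedAddCommGroup F] [NormedSpace ℝ F] {f : E → F} {K : ℝ≥0}

theorem norm_sub_sub_fderiv_le (hf : Differentiable ℝ f) (hK : LipschitzWith K (fderiv ℝ f))
    (x h : E) : ‖f (x + h) - f x - fderiv ℝ f x h‖ ≤ K * ‖h‖ ^ 2 := by
  have hderiv : ∀ y ∈ Metric.closedBall x ‖h‖, HasFDerivWithinAt (fun y => f y - fderiv ℝ f x y)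
      (fderiv ℝ f y - fderiv ℝ f x) (Metric.closedBall x ‖h‖) y :=
    fun y _ => ((hf y).hasFDerivAt.sub (fderiv ℝ f x).hasFDerivAt).hasFDerivWithinAt
  have hbound : ∀ y ∈ Metric.closedBall x ‖h‖, ‖fderiv ℝ f y - fderiv ℝ f x‖ ≤ K * ‖h‖ :=
    fun y hy => (hK.norm_sub_le y x).trans
      (mul_le_mul_of_nonneg_left (mem_closedBall_iff_norm.1 hy) K.2)
  have := (convex_closedBall x ‖h‖).norm_image_sub_le_of_norm_hasFDerivWithin_le hderiv hbound
    (Metric.mem_closedBall_self (norm_nonneg h)) (y := x + h) (by simp)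
  calc ‖f (x + h) - f x - fderiv ℝ f x h‖
      = ‖(f (x + h) - fderiv ℝ f x (x + h)) - (f x - fderiv ℝ f x x)‖ := by
        rw [map_add]; congr 1; abel
    _ ≤ K * ‖h‖ * ‖x + h - x‖ := this
    _ = K * ‖h‖ ^ 2 := by rw [add_sub_cancel_left]; ring

theorem norm_second_difference_le (hf : Differentiable ℝ f)
    (hK : LipschitzWith K (fderiv ℝ f)) (x h : E) :
    ‖f (x + h) + f (x - h) - (2 : ℝ) • f x‖ ≤ 2 * K * ‖h‖ ^ 2 := by
  have hplus := norm_sub_sub_fderiv_le hf hK x h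
  have hminus := norm_sub_sub_fderiv_le hf hK x (-h)
  rw [norm_neg] at hminus
  calc ‖f (x + h) + f (x - h) - (2 : ℝ) • f x‖
      = ‖(f (x + h) - f x - fderiv ℝ f x h) + (f (x + -h) - f x - fderiv ℝ f x (-h))‖ := by
        rw [map_neg, ← sub_eq_add_neg, two_smul]; congr 1; abel
    _ ≤ 2 * K * ‖h‖ ^ 2 := (norm_add_le _ _).trans (by linarith)

end SecondDifference

theorem lipschitzWith_gradient_iff {E : Type*} [NormedAddCommGroup E] [InnerProductSpace ℝ E]
    [CompleteSpace E] {f : E → ℝ} (K : ℝ≥0) :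
    LipschitzWith K (gradient f) ↔ LipschitzWith K (fderiv ℝ f) :=
  (InnerProductSpace.toDual ℝ E).symm.isometry.lipschitzWith_iff K

theorem abs_second_difference_le_of_gradient {E : Type*} [NormedAddCommGroup E]
    [InnerProductSpace ℝ E] [CompleteSpace E] {f : E → ℝ} {L : ℝ} (hf : Differentiable ℝ f)
    (hL0 : 0 ≤ L) (hL : ∀ x y, ‖gradient f x - gradient f y‖ ≤ L * ‖x - y‖) (x h : E) :
    |f (x - h) + f (x + h) - 2 * f x| ≤ 2 * L * ‖h‖ ^ 2 := by
  have hLip : LipschitzWith ⟨L, hL0⟩ (fderiv ℝ f) :=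
    (lipschitzWith_gradient_iff _).mp (LipschitzWith.of_dist_le_mul fun x y => by
      rw [dist_eq_norm, dist_eq_norm]; exact hL x y)
  rw [add_comm, ← smul_eq_mul, ← Real.norm_eq_abs]
  exact norm_second_difference_le hf hLip x h

section PosSemidefSqrt

variable {n : Type*} [Fintype n]

theorem Matrix.mulVec_dotProduct_mulVec {R : Type*} [CommSemiring R] (A B : Matrix n n R)
    (x y : n → R) : (A *ᵥ x) ⬝ᵥ (B *ᵥ y) = x ⬝ᵥ ((Aᵀ * B) *ᵥ y) := by
  rw [dotProduct_mulVec, vecMul_mulVec, ← dotProduct_mulVec]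

variable [DecidableEq n]

theorem Matrix.PosSemidef.sqrt_mul_self {A : Matrix n n ℝ} (hA : A.PosSemidef) :
    hA.sqrt * hA.sqrt = A := by
  have hU : star (hA.1.eigenvectorUnitary : Matrix n n ℝ) * hA.1.eigenvectorUnitary = 1 :=
    hA.1.eigenvectorUnitary.2.1
  unfold Matrix.PosSemidef.sqrt
  conv_rhs => rw [hA.1.spectral_theorem, Unitary.conjStarAlgAut_apply]
  rw [show ∀ U D V : Matrix n n ℝ, U * D * V * (U * D * V) = U * (D * (V * U) * D) * V by
    intros; simp only [Matrix.mul_assoc], hU, Matrix.mul_one, diagonal_mul_diagonal]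
  congr 3
  funext k
  simp [Real.mul_self_sqrt (hA.eigenvalues_nonneg k)]

theorem Matrix.PosSemidef.transpose_sqrt {A : Matrix n n ℝ} (hA : A.PosSemidef) :
    hA.sqrtᵀ = hA.sqrt := by
  have hsqrt : hA.sqrt.PosSemidef := by
    unfold Matrix.PosSemidef.sqrt
    rw [star_eq_conjTranspose]
    refine (posSemidef_diagonal_iff.mpr fun k => ?_).mul_mul_conjTranspose_same _
    simp [Real.sqrt_nonneg]
  exact (isHermitian_iff_isSymm.mp hsqrt.1).eq

theorem Matrix.PosSemidef.dotProduct_mulVec_self_le {A : Matrix n n ℝ} (hA : A.PosSemidef) {ζ : ℝ}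
    (hζ : 0 ≤ ζ) (hAζ : ∀ x, x ⬝ᵥ (A *ᵥ x) ≤ ζ * (x ⬝ᵥ x)) (x : n → ℝ) :
    (A *ᵥ x) ⬝ᵥ (A *ᵥ x) ≤ ζ ^ 2 * (x ⬝ᵥ x) := by
  set Q := hA.sqrt
  have hQ : ∀ y, (Q *ᵥ y) ⬝ᵥ (Q *ᵥ y) = y ⬝ᵥ (A *ᵥ y) := fun y => by
    rw [mulVec_dotProduct_mulVec, hA.transpose_sqrt, hA.sqrt_mul_self]
  calc (A *ᵥ x) ⬝ᵥ (A *ᵥ x) = (Q *ᵥ x) ⬝ᵥ (A *ᵥ (Q *ᵥ x)) := by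
        rw [← hQ, mulVec_mulVec, hA.sqrt_mul_self]
    _ ≤ ζ * ((Q *ᵥ x) ⬝ᵥ (Q *ᵥ x)) := hAζ _
    _ = ζ * (x ⬝ᵥ (A *ᵥ x)) := by rw [hQ]
    _ ≤ ζ * (ζ * (x ⬝ᵥ x)) := mul_le_mul_of_nonneg_left (hAζ x) hζ
    _ = ζ ^ 2 * (x ⬝ᵥ x) := by ring

end PosSemidefSqrt

section Loewner

variable {d : ℕ} {A : Mat d} {τ ζ : ℝ}

theorem loeLE.mul_dotProduct_le_dotProduct_mulVec (h : loeLE (τ • 1) A) (x : Fin d → ℝ) :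
    τ * (x ⬝ᵥ x) ≤ x ⬝ᵥ (A *ᵥ x) := by
  have := h.dotProduct_mulVec_nonneg x
  simpa [sub_mulVec, smul_mulVec, dotProduct_smul] using this

theorem loeLE.dotProduct_mulVec_le_mul_dotProduct (h : loeLE A (ζ • 1)) (x : Fin d → ℝ) :
    x ⬝ᵥ (A *ᵥ x) ≤ ζ * (x ⬝ᵥ x) := by
  have := h.dotProduct_mulVec_nonneg x
  simpa [sub_mulVec, smul_mulVec, dotProduct_smul] using this

end Loewner

section Frobenius

attribute [local instance] Matrix.frobeniusNormedAddCommGroup Matrix.frobeniusNormedSpace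

variable {m n : ℕ}

theorem matFrobNorm_eq_norm (A : Matrix (Fin m) (Fin n) ℝ) : matFrobNorm A = ‖A‖ := by
  simp [matFrobNorm, frobenius_norm_def, Real.sqrt_eq_rpow, Real.norm_eq_abs]

theorem matFrobNorm_smul_sub_le (s : ℝ) (A B : Matrix (Fin m) (Fin n) ℝ) :
    matFrobNorm (s • (A - B)) ≤ |s| * (matFrobNorm A + matFrobNorm B) := by
  simp only [matFrobNorm_eq_norm, norm_smul, Real.norm_eq_abs]
  exact mul_le_mul_of_nonneg_left (norm_sub_le A B) (abs_nonneg s)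

end Frobenius

theorem matFrobNorm_vecMulVec_self {n : ℕ} (w : Fin n → ℝ) :
    matFrobNorm (vecMulVec w w) = w ⬝ᵥ w := by
  have hsum : ∑ i, ∑ j, (vecMulVec w w i j) ^ 2 = (w ⬝ᵥ w) ^ 2 := by
    simp only [vecMulVec_apply, dotProduct, sq, Finset.sum_mul_sum]
    exact Finset.sum_congr rfl fun i _ => Finset.sum_congr rfl fun j _ => by ring
  rw [matFrobNorm, hsum, Real.sqrt_sq (by simpa using dotProduct_self_star_nonneg w)]

theorem Matrix.PosSemidef.matFrobNorm_le {d : ℕ} {A : Mat d} (hA : A.PosSemidef) {ζ : ℝ}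
    (hζ : 0 ≤ ζ) (hAζ : loeLE A (ζ • 1)) : matFrobNorm A ≤ Real.sqrt d * ζ := by
  have hcol : ∀ j, ∑ i, (A i j) ^ 2 ≤ ζ ^ 2 := fun j => by
    simpa [mulVec_single_one, dotProduct, sq, Pi.single_apply] using
      hA.dotProduct_mulVec_self_le hζ hAζ.dotProduct_mulVec_le_mul_dotProduct (Pi.single j 1)
  have hsum : ∑ i, ∑ j, (A i j) ^ 2 ≤ d * ζ ^ 2 := by
    rw [Finset.sum_comm]
    simpa using Finset.sum_le_sum fun j (_ : j ∈ Finset.univ) => hcol j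
  rw [matFrobNorm, ← Real.sqrt_sq hζ, ← Real.sqrt_mul (Nat.cast_nonneg d)]
  exact Real.sqrt_le_sqrt hsum

section SymmetricSquareRoot

variable {n : Type*} [Fintype n] [DecidableEq n] {R : Matrix n n ℝ}

theorem Matrix.mulVec_dotProduct_inv_mul_self_mulVec (hR : Rᵀ = R) (hdet : IsUnit R.det)
    (x : n → ℝ) : (R *ᵥ x) ⬝ᵥ ((R * R)⁻¹ *ᵥ (R *ᵥ x)) = x ⬝ᵥ x := by
  rw [mulVec_mulVec, mulVec_dotProduct_mulVec, hR, mul_inv_rev, Matrix.mul_assoc R⁻¹,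
    nonsing_inv_mul R hdet, Matrix.mul_one, mul_nonsing_inv R hdet, one_mulVec]

theorem Matrix.inv_mulVec_dotProduct_inv_mulVec (hR : Rᵀ = R) (x : n → ℝ) :
    (R⁻¹ *ᵥ x) ⬝ᵥ (R⁻¹ *ᵥ x) = x ⬝ᵥ ((R * R)⁻¹ *ᵥ x) := by
  rw [mulVec_dotProduct_mulVec, transpose_nonsing_inv, hR, mul_inv_rev]

end SymmetricSquareRoot

theorem EuclideanSpace.norm_sq_eq_dotProduct {d : ℕ} (v : Vec d) :
    ‖v‖ ^ 2 = toPi v ⬝ᵥ toPi v := by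
  rw [EuclideanSpace.norm_eq, Real.sq_sqrt (by positivity)]
  simp [dotProduct, toPi, sq]

namespace Matrix.PosDef

variable {d : ℕ} {S : Mat d}

theorem isUnit_det_sqrt (hS : S.PosDef) : IsUnit hS.posSemidef.sqrt.det :=
  (isUnit_iff_isUnit_det _).mp
    (isUnit_of_mul_isUnit_left (hS.posSemidef.sqrt_mul_self ▸ hS.isUnit))

theorem norm_sq_mvec_sqrt_le (hS : S.PosDef) {τ : ℝ} (hτ : 0 < τ) (hτS : loeLE (τ • 1) S⁻¹)
    (u : Vec d) :
    ‖mvec hS.posSemidef.sqrt u‖ ^ 2 ≤ τ⁻¹ * ‖u‖ ^ 2 := by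
  rw [← hS.posSemidef.sqrt_mul_self] at hτS
  rw [EuclideanSpace.norm_sq_eq_dotProduct, EuclideanSpace.norm_sq_eq_dotProduct,
    le_inv_mul_iff₀ hτ]
  exact (hτS.mul_dotProduct_le_dotProduct_mulVec _).trans_eq
    (mulVec_dotProduct_inv_mul_self_mulVec hS.posSemidef.transpose_sqrt hS.isUnit_det_sqrt _)

theorem inv_sqrt_mulVec_dotProduct_le (hS : S.PosDef) {ζ : ℝ} (hSζ : loeLE S⁻¹ (ζ • 1))
    (x : Fin d → ℝ) :
    (hS.posSemidef.sqrt⁻¹ *ᵥ x) ⬝ᵥ (hS.posSemidef.sqrt⁻¹ *ᵥ x) ≤ ζ * (x ⬝ᵥ x) := by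
  rw [inv_mulVec_dotProduct_inv_mulVec hS.posSemidef.transpose_sqrt, hS.posSemidef.sqrt_mul_self]
  exact hSζ.dotProduct_mulVec_le_mul_dotProduct x

end Matrix.PosDef

theorem stmt12_general {d : ℕ}
    (f : Vec d → ℝ) (L : ℝ) (hL0 : 0 < L) (hf : ContDiff ℝ 2 f)
    (hL : ∀ x y : Vec d, ‖gradient f x - gradient f y‖ ≤ L * ‖x - y‖)
    (μ : Vec d) (α : ℝ) (τ ζ : ℝ) (hτ : 0 < τ) (hτζ : τ ≤ ζ)
    (S : Mat d) (hS : S.PosDef)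
    (hτS : loeLE (τ • 1) S⁻¹) (hSζ : loeLE S⁻¹ (ζ • 1))
    (u : Vec d) (c : ℝ) (hu : ‖u‖ ^ 2 ≤ c) :
    matFrobNorm (Matrix.of fun i j =>
        (f (μ - α • mvec hS.posSemidef.sqrt u) + f (μ + α • mvec hS.posSemidef.sqrt u)
            - 2 * f μ) *
          (((hS.posSemidef.sqrt)⁻¹.mulVec (toPi u)) i *
             ((hS.posSemidef.sqrt)⁻¹.mulVec (toPi u)) j - S⁻¹ i j))
      ≤ 2 * L * τ⁻¹ * α ^ 2 * c * (ζ * c + Real.sqrt d * ζ) := by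
  set h := α • mvec hS.posSemidef.sqrt u
  set w := hS.posSemidef.sqrt⁻¹ *ᵥ toPi u
  set s := f (μ - h) + f (μ + h) - 2 * f μ
  have hζ : 0 ≤ ζ := hτ.le.trans hτζ
  have hc : 0 ≤ c := (sq_nonneg _).trans hu
  have hs : |s| ≤ 2 * L * (α ^ 2 * (τ⁻¹ * c)) := by
    have hsecond :=
      abs_second_difference_le_of_gradient (hf.differentiable two_ne_zero) hL0.le hL μ h
    refine hsecond.trans ?_
    rw [norm_smul, mul_pow, Real.norm_eq_abs, sq_abs]
    gcongr
    exact (hS.norm_sq_mvec_sqrt_le hτ hτS u).trans (by gcongr)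
  have hw : matFrobNorm (vecMulVec w w) ≤ ζ * c := by
    rw [matFrobNorm_vecMulVec_self]
    refine (hS.inv_sqrt_mulVec_dotProduct_le hSζ _).trans (mul_le_mul_of_nonneg_left ?_ hζ)
    rwa [← EuclideanSpace.norm_sq_eq_dotProduct]
  have hmat : (Matrix.of fun i j => s * (w i * w j - S⁻¹ i j)) = s • (vecMulVec w w - S⁻¹) := by
    ext i j
    simp [vecMulVec_apply]
  rw [hmat]
  calc matFrobNorm (s • (vecMulVec w w - S⁻¹))
      ≤ |s| * (matFrobNorm (vecMulVec w w) + matFrobNorm S⁻¹) := matFrobNorm_smul_sub_le _ _ _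
    _ ≤ 2 * L * (α ^ 2 * (τ⁻¹ * c)) * (ζ * c + Real.sqrt d * ζ) :=
        mul_le_mul hs (add_le_add hw (hS.inv.posSemidef.matFrobNorm_le hζ hSζ))
          (add_nonneg (Real.sqrt_nonneg _) (Real.sqrt_nonneg _)) (by positivity)
    _ = 2 * L * τ⁻¹ * α ^ 2 * c * (ζ * c + Real.sqrt d * ζ) := by ring

/-- Frobenius-norm bound on a single term of the covariance-gradient
estimator, given `‖u‖² ≤ c`. -/
theorem stmt12 {d : ℕ} (hd : 1 ≤ d)
    (f : Vec d → ℝ) (L : ℝ) (hL0 : 0 < L) (hf : ContDiff ℝ 2 f)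
    (hL : ∀ x y : Vec d, ‖gradient f x - gradient f y‖ ≤ L * ‖x - y‖)
    (μ : Vec d) (α : ℝ) (hα : 0 < α) (τ ζ : ℝ) (hτ : 0 < τ) (hτζ : τ ≤ ζ)
    (S : Mat d) (hSsymm : S.IsSymm) (hS : S.PosDef)
    (hτS : loeLE (τ • 1) S⁻¹) (hSζ : loeLE S⁻¹ (ζ • 1))
    (u : Vec d) (c : ℝ) (hc : 0 < c) (hu : ‖u‖ ^ 2 ≤ c) :
    matFrobNorm (Matrix.of fun i j =>
        (f (μ - α • mvec hS.posSemidef.sqrt u) + f (μ + α • mvec hS.posSemidef.sqrt u)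
            - 2 * f μ) *
          (((hS.posSemidef.sqrt)⁻¹.mulVec (toPi u)) i *
             ((hS.posSemidef.sqrt)⁻¹.mulVec (toPi u)) j - S⁻¹ i j))
      ≤ 2 * L * τ⁻¹ * α ^ 2 * c * (ζ * c + Real.sqrt d * ζ) :=
  stmt12_general f L hL0 hf hL μ α τ ζ hτ hτζ S hS hτS hSζ u c hu
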